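/- Every dissipative quadratic stochastic operator V on S^{m-1} has at least one fixed point, and its set of fixed points Fix(V) is either a singleton or an infinite set (in particular, V cannot have exactly two, or any finite number greater than one, of fixed points). -/

import Mathlib

open Finset Filter Topology

/-- `Majorizes y x` means `x ≺ y`: for every `k`, the sum of the `k` largest components of
`x` is at most the sum of the `k` largest components of `y`.  This is expressed via the
standard equivalent form: every subset-sum of `x` is dominated by some subset-sum of `y`
over a subset of the same cardinality (the maximum of the latter over subsets of
cardinality `k` being exactly the sum of the `k` largest components of `y`). -/
def Majorizes {m : ℕ} (y x : Fin m → ℝ) : Prop :=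
  ∀ A : Finset (Fin m), ∃ B : Finset (Fin m),
    B.card = A.card ∧ ∑ i ∈ A, x i ≤ ∑ i ∈ B, y i

/-- The quadratic operator `(Vx)_k = ∑_{i,j} p_{ij,k} x_i x_j` with heredity
coefficients `p`. -/
def QSO {m : ℕ} (p : Fin m → Fin m → Fin m → ℝ) (x : Fin m → ℝ) : Fin m → ℝ :=
  fun k => ∑ i, ∑ j, p i j k * x i * x j

/-- Conditions on heredity coefficients: symmetry, nonnegativity, stochasticity. -/
def IsQSOCoeff {m : ℕ} (p : Fin m → Fin m → Fin m → ℝ) : Prop :=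
  (∀ i j k, p i j k = p j i k) ∧ (∀ i j k, 0 ≤ p i j k) ∧ (∀ i j, ∑ k, p i j k = 1)

/-- Dissipativity of the q.s.o.: `V x ≻ x` for every `x` in the simplex. -/
def IsDissipative {m : ℕ} (p : Fin m → Fin m → Fin m → ℝ) : Prop :=
  ∀ x ∈ stdSimplex ℝ (Fin m), Majorizes (QSO p x) x

/-- The `k`-th vertex of the simplex (the `k`-th standard basis vector). -/
def vertex {m : ℕ} (k : Fin m) : Fin m → ℝ := fun j => if j = k then 1 else 0

/-- The ω-limit set of the trajectory of `x` under `V`: the set of all limit points of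
the sequence `(Vⁿ x)ₙ`. -/
def omegaLimitSet {m : ℕ} (V : (Fin m → ℝ) → Fin m → ℝ) (x : Fin m → ℝ) :
    Set (Fin m → ℝ) :=
  {y | ∃ φ : ℕ → ℕ, StrictMono φ ∧ Tendsto (fun n => V^[φ n] x) atTop (𝓝 y)}

/-!
Testing dissipativity at a vertex shows `p i i = vertex (σ i)` for a self-map `σ` of the indices;
testing it at points of an edge close to a vertex gives `1/2 ≤ p i j (σ i)`, hence
`p i j = (vertex (σ i) + vertex (σ j)) / 2` when `σ i ≠ σ j`. So `V` coincides with the linear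
pushforward along `σ` on distributions supported by a set on which `σ` is injective, such as the
periodic points of `σ`. Every fixed point is supported by the periodic points: the mass of this set
never decreases under `V`, and it strictly increases as soon as some weight sits on a point mapped
into it from outside. Therefore `Fix(V)` is convex; it contains the uniform distribution on a cycle
of `σ`, and a nonempty convex set is a singleton or infinite.
-/

open Function Set

theorem Convex.eq_singleton_or_infinite {𝕜 E : Type*} [Field 𝕜] [LinearOrder 𝕜]
    [IsStrictOrderedRing 𝕜] [AddCommGroup E] [Module 𝕜 E] {s : Set E} (hs : Convex 𝕜 s)
    (hne : s.Nonempty) : (∃ a, s = {a}) ∨ s.Infinite := by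
  rcases hne.exists_eq_singleton_or_nontrivial with h | ⟨x, hx, y, hy, hxy⟩
  · exact Or.inl h
  · refine Or.inr (Set.Infinite.mono (hs.segment_subset hx hy) ?_)
    rw [segment_eq_image_lineMap]
    exact (Icc_infinite zero_lt_one).image (AffineMap.lineMap_injective 𝕜 hxy).injOn

theorem Function.exists_iterate_mem_periodicPts {α : Type*} [Finite α] (f : α → α) (x : α) :
    ∃ n, f^[n] x ∈ periodicPts f := by
  obtain ⟨a, b, hab, heq⟩ := Finite.exists_ne_map_eq_of_infinite (fun n : ℕ => f^[n] x)
  wlog h : a < b generalizing a b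
  · exact this b a hab.symm heq.symm (by omega)
  refine ⟨a, mk_mem_periodicPts (n := b - a) (by omega) ?_⟩
  rw [IsPeriodicPt, IsFixedPt, ← iterate_add_apply, Nat.sub_add_cancel h.le]
  exact heq.symm

theorem Function.sum_range_minimalPeriod_iterate_succ {α M : Type*} [AddCancelCommMonoid M]
    (f : α → α) (x : α) (g : α → M) :
    ∑ l ∈ range (minimalPeriod f x), g (f^[l + 1] x) =
      ∑ l ∈ range (minimalPeriod f x), g (f^[l] x) := by
  have h := (sum_range_succ' (fun l => g (f^[l] x)) (minimalPeriod f x)).symm.trans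
    (sum_range_succ _ _)
  rw [iterate_minimalPeriod, iterate_zero_apply] at h
  exact add_right_cancel h

theorem sum_sum_avg_mul {ι R : Type*} [Fintype ι] [Field R] [CharZero R] (a x : ι → R) :
    ∑ i, ∑ j, (a i + a j) / 2 * x i * x j = (∑ i, a i * x i) * ∑ j, x j := by
  have h₁ : ∑ i, ∑ j, a i * x i * x j = (∑ i, a i * x i) * ∑ j, x j :=
    (Finset.sum_mul_sum _ _ _ _).symm
  have h₂ : ∑ i, ∑ j, x i * (a j * x j) = (∑ i, a i * x i) * ∑ j, x j := by
    rw [← Finset.sum_mul_sum, mul_comm]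
  calc ∑ i, ∑ j, (a i + a j) / 2 * x i * x j
      = (∑ i, ∑ j, a i * x i * x j + ∑ i, ∑ j, x i * (a j * x j)) / 2 := by
        simp only [← Finset.sum_add_distrib, Finset.sum_div]
        exact Finset.sum_congr rfl fun i _ => Finset.sum_congr rfl fun j _ => by ring
    _ = _ := by rw [h₁, h₂, ← two_mul, mul_div_cancel_left₀ _ two_ne_zero]

variable {m : ℕ} {p : Fin m → Fin m → Fin m → ℝ} {σ : Fin m → Fin m}

theorem Majorizes.exists_le {y x : Fin m → ℝ} (h : Majorizes y x) (i : Fin m) :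
    ∃ k, x i ≤ y k := by
  obtain ⟨B, hB, hle⟩ := h {i}
  obtain ⟨k, rfl⟩ := Finset.card_eq_one.mp hB
  exact ⟨k, by simpa using hle⟩

theorem vertex_eq_single (k : Fin m) : vertex k = Pi.single k 1 := by
  ext j
  simp [vertex, Pi.single_apply]

theorem vertex_mem_stdSimplex (k : Fin m) : vertex k ∈ stdSimplex ℝ (Fin m) :=
  vertex_eq_single k ▸ single_mem_stdSimplex ℝ k

theorem sum_vertex (k : Fin m) : ∑ j, vertex k j = 1 := by
  simp [vertex]

theorem qso_vertex (i : Fin m) : QSO p (vertex i) = p i i := by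
  ext k
  simp [QSO, vertex]

theorem qso_smul_vertex_add_smul_vertex_apply (hsym : ∀ i j k, p i j k = p j i k)
    (i j : Fin m) (t : ℝ) (k : Fin m) :
    QSO p (t • vertex i + (1 - t) • vertex j) k =
      t ^ 2 * p i i k + 2 * t * (1 - t) * p i j k + (1 - t) ^ 2 * p j j k := by
  simp [QSO, vertex, mul_add, add_mul, Finset.sum_add_distrib, ite_mul, mul_ite, hsym j i]
  ring

theorem sum_mul_qso (a x : Fin m → ℝ) :
    ∑ k, a k * QSO p x k = ∑ i, ∑ j, (∑ k, a k * p i j k) * x i * x j := by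
  simp only [QSO, Finset.mul_sum, Finset.sum_mul]
  rw [Finset.sum_comm]
  refine Finset.sum_congr rfl fun i _ => ?_
  rw [Finset.sum_comm]
  exact Finset.sum_congr rfl fun j _ => Finset.sum_congr rfl fun k _ => by ring

theorem mul_sq_le_qso_apply (hp : IsQSOCoeff p) {x : Fin m → ℝ} (hx : ∀ i, 0 ≤ x i)
    (i k : Fin m) : p i i k * x i ^ 2 ≤ QSO p x k := by
  have hterm : ∀ i' j, 0 ≤ p i' j k * x i' * x j := fun i' j =>
    mul_nonneg (mul_nonneg (hp.2.1 _ _ _) (hx i')) (hx j)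
  calc p i i k * x i ^ 2 = p i i k * x i * x i := by ring
    _ ≤ ∑ j, p i j k * x i * x j := Finset.single_le_sum (fun j _ => hterm i j) (mem_univ i)
    _ ≤ QSO p x k :=
      Finset.single_le_sum (f := fun i' => ∑ j, p i' j k * x i' * x j)
        (fun i' _ => Finset.sum_nonneg fun j _ => hterm i' j) (mem_univ i)

theorem IsQSOCoeff.le_one (hp : IsQSOCoeff p) (i j k : Fin m) : p i j k ≤ 1 :=
  hp.2.2 i j ▸ Finset.single_le_sum (fun k _ => hp.2.1 i j k) (mem_univ k)

theorem IsQSOCoeff.eq_of_le (hp : IsQSOCoeff p) (i j : Fin m) {w : Fin m → ℝ}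
    (hw : ∑ k, w k = 1) (hle : ∀ k, w k ≤ p i j k) : p i j = w := by
  funext k
  refine ((Finset.sum_eq_sum_iff_of_le fun k _ => hle k).mp ?_ k (mem_univ k)).symm
  rw [hw, hp.2.2]

noncomputable def pushforward (σ : Fin m → Fin m) : (Fin m → ℝ) →ₗ[ℝ] Fin m → ℝ :=
  Fintype.linearCombination ℝ fun i => vertex (σ i)

theorem pushforward_apply (x : Fin m → ℝ) (k : Fin m) :
    pushforward σ x k = ∑ i, vertex (σ i) k * x i := by
  simp [pushforward, Fintype.linearCombination_apply, mul_comm]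

theorem pushforward_vertex (i : Fin m) : pushforward σ (vertex i) = vertex (σ i) := by
  ext k
  simp [pushforward_apply, vertex]

namespace IsDissipative

variable (hd : IsDissipative p) (hp : IsQSOCoeff p)
include hd hp

theorem exists_diag_eq_vertex : ∃ σ : Fin m → Fin m, ∀ i, p i i = vertex (σ i) := by
  choose σ hσ using fun i => (hd _ (vertex_mem_stdSimplex i)).exists_le i
  refine ⟨σ, fun i => hp.eq_of_le i i (sum_vertex _) fun k => ?_⟩
  have h := hσ i
  simp only [qso_vertex, vertex, if_true] at h
  unfold vertex
  split_ifs with hk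
  · exact hk ▸ h
  · exact hp.2.1 i i k

variable (hσ : ∀ i, p i i = vertex (σ i))
include hσ

theorem half_le_coeff (i j : Fin m) : 1 / 2 ≤ p i j (σ i) := by
  obtain rfl | hij := eq_or_ne i j
  · norm_num [hσ, vertex]
  by_contra! hα
  have hα₀ := hp.2.1 i j (σ i)
  /- For `t` close to `1`, only the coordinate `σ i` of `V x` can reach `x i = t`, and that forces
  `p i j (σ i) ≥ 1 - 1 / (2 t)`; this `t` violates the bound. -/
  obtain ⟨t, ht⟩ : ∃ t : ℝ, t = (3 + 2 * p i j (σ i)) / 4 := ⟨_, rfl⟩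
  have hx := convex_stdSimplex ℝ (Fin m) (vertex_mem_stdSimplex i) (vertex_mem_stdSimplex j)
    (by linarith) (by linarith) (add_sub_cancel t 1)
  obtain ⟨c, hc⟩ := (hd _ hx).exists_le i
  rw [qso_smul_vertex_add_smul_vertex_apply hp.1, hσ, hσ] at hc
  simp only [Pi.add_apply, Pi.smul_apply, smul_eq_mul, vertex, if_true, if_neg hij, mul_one,
    mul_zero, add_zero] at hc
  have hle := hp.le_one i j c
  have hnn := hp.2.1 i j c
  have htt : 0 < t * (1 - t) := mul_pos (by linarith) (by linarith)
  obtain rfl | hci := eq_or_ne c (σ i)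
  · have : 0 < (1 - t) * (2 * t - 1 - 2 * t * p i j (σ i)) :=
      mul_pos (by linarith) (by nlinarith)
    split_ifs at hc <;> nlinarith
  · simp only [if_neg hci, mul_zero, zero_add] at hc
    split_ifs at hc <;> nlinarith

theorem coeff_eq_avg {i j : Fin m} (hij : σ i = σ j → i = j) :
    p i j = fun k => (vertex (σ i) k + vertex (σ j) k) / 2 := by
  by_cases hs : σ i = σ j
  · obtain rfl := hij hs
    ext k
    rw [hσ, add_self_div_two]
  have hsum : ∑ k, (vertex (σ i) k + vertex (σ j) k) / 2 = 1 := by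
    simp [Finset.sum_add_distrib, ← Finset.sum_div, sum_vertex]
  refine hp.eq_of_le i j hsum fun k => ?_
  have hi := hd.half_le_coeff hp hσ i j
  have hj := hd.half_le_coeff hp hσ j i
  rw [hp.1] at hj
  unfold vertex
  split_ifs with h₁ h₂ h₂
  · exact absurd (h₁.symm.trans h₂) hs
  · subst h₁; linarith
  · subst h₂; linarith
  · linarith [hp.2.1 i j k]

variable {S : Set (Fin m)}

theorem qso_eq_pushforward (hS : InjOn σ S) {x : Fin m → ℝ} (hx : ∑ i, x i = 1)
    (hxS : ∀ i ∉ S, x i = 0) : QSO p x = pushforward σ x := by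
  ext k
  have hterm : ∀ i j,
      p i j k * x i * x j = (vertex (σ i) k + vertex (σ j) k) / 2 * x i * x j := by
    intro i j
    by_cases hi : i ∈ S
    · by_cases hj : j ∈ S
      · rw [hd.coeff_eq_avg hp hσ fun h => hS hi hj h]
      · simp [hxS j hj]
    · simp [hxS i hi]
  simp only [QSO, hterm, sum_sum_avg_mul, hx, mul_one, pushforward_apply]

section Invariant

variable (hS : MapsTo σ S S) (hinj : InjOn σ S)
include hS hinj

theorem avg_indicator_le_sum_indicator_mul (i j : Fin m) :
    (S.indicator 1 i + S.indicator 1 j) / 2 ≤ ∑ k, S.indicator (1 : Fin m → ℝ) k * p i j k := by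
  have hterm : ∀ k, 0 ≤ S.indicator (1 : Fin m → ℝ) k * p i j k := fun k =>
    mul_nonneg (indicator_nonneg (fun _ _ => zero_le_one) k) (hp.2.1 i j k)
  have hsingle : ∀ k ∈ S, p i j k ≤ ∑ k, S.indicator (1 : Fin m → ℝ) k * p i j k :=
    fun k hk => by simpa [hk] using Finset.single_le_sum (fun k _ => hterm k) (mem_univ k)
  by_cases hi : i ∈ S <;> by_cases hj : j ∈ S
  · rw [hd.coeff_eq_avg hp hσ fun h => hinj hi hj h]
    simp [hi, hj, hS hi, hS hj, vertex, mul_add, add_div, mul_div_assoc',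
      Finset.sum_add_distrib, ← Finset.sum_div, mul_ite]
  · simpa [hi, hj] using (hd.half_le_coeff hp hσ i j).trans (hsingle _ (hS hi))
  · have h := hd.half_le_coeff hp hσ j i
    rw [hp.1] at h
    simpa [hi, hj] using h.trans (hsingle _ (hS hj))
  · simpa [hi, hj] using Finset.sum_nonneg fun k _ => hterm k

theorem apply_eq_zero_of_fixed_of_map_mem {x : Fin m → ℝ} (hx : x ∈ stdSimplex ℝ (Fin m))
    (hfix : QSO p x = x) {i : Fin m} (hi : i ∉ S) (hσi : σ i ∈ S) : x i = 0 := by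
  set a : Fin m → ℝ := S.indicator 1
  /- The mass `∑ k, a k * x k` of `S` cannot decrease under `V`, and the diagonal term at `i`
  alone raises it by `x i ^ 2`. -/
  have hgain : ∀ i j, 0 ≤ ((∑ k, a k * p i j k) - (a i + a j) / 2) * x i * x j := fun i j =>
    mul_nonneg (mul_nonneg
      (sub_nonneg.mpr (hd.avg_indicator_le_sum_indicator_mul hp hσ hS hinj i j)) (hx.1 i)) (hx.1 j)
  have htotal : ∑ i, ∑ j, ((∑ k, a k * p i j k) - (a i + a j) / 2) * x i * x j = 0 := by
    simp only [sub_mul, Finset.sum_sub_distrib, ← sum_mul_qso, sum_sum_avg_mul, hfix, hx.2,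
      mul_one, sub_self]
  have hdiag : ((∑ k, a k * p i i k) - (a i + a i) / 2) * x i * x i ≤ 0 :=
    htotal ▸ (Finset.single_le_sum (fun j _ => hgain i j) (mem_univ i)).trans
      (Finset.single_le_sum (fun i _ => Finset.sum_nonneg fun j _ => hgain i j) (mem_univ i))
  simp [a, hσ, vertex, hi, hσi] at hdiag
  exact mul_self_eq_zero.mp (le_antisymm hdiag (mul_self_nonneg _))

theorem apply_eq_zero_of_fixed_of_notMem (hreach : ∀ i, ∃ n, σ^[n] i ∈ S) {x : Fin m → ℝ}
    (hx : x ∈ stdSimplex ℝ (Fin m)) (hfix : QSO p x = x) {i : Fin m} (hi : i ∉ S) : x i = 0 := by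
  by_contra hxi
  have hT : MapsTo σ {j | j ∉ S ∧ x j ≠ 0} {j | j ∉ S ∧ x j ≠ 0} := by
    rintro j ⟨hj, hxj⟩
    refine ⟨fun hσj => hxj ?_, ?_⟩
    · exact hd.apply_eq_zero_of_fixed_of_map_mem hp hσ hS hinj hx hfix hj hσj
    have hsq := mul_sq_le_qso_apply hp hx.1 j (σ j)
    simp only [hfix, hσ, vertex, if_true, one_mul] at hsq
    exact (lt_of_lt_of_le (pow_pos ((hx.1 j).lt_of_ne' hxj) 2) hsq).ne'
  obtain ⟨n, hn⟩ := hreach i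
  exact (hT.iterate n ⟨hi, hxi⟩).1 hn

end Invariant

theorem convex_fixedPoints : Convex ℝ {x ∈ stdSimplex ℝ (Fin m) | QSO p x = x} := by
  have hsupp : ∀ x ∈ {x ∈ stdSimplex ℝ (Fin m) | QSO p x = x}, ∀ i ∉ periodicPts σ, x i = 0 :=
    fun x hx i hi => hd.apply_eq_zero_of_fixed_of_notMem hp hσ
      (bijOn_periodicPts σ).mapsTo (bijOn_periodicPts σ).injOn
      (exists_iterate_mem_periodicPts σ) hx.1 hx.2 hi
  have hlin : ∀ x ∈ stdSimplex ℝ (Fin m), (∀ i ∉ periodicPts σ, x i = 0) →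
      QSO p x = pushforward σ x := fun x hx =>
    hd.qso_eq_pushforward hp hσ (bijOn_periodicPts σ).injOn hx.2
  intro x hx y hy a b ha hb hab
  have hz := convex_stdSimplex ℝ (Fin m) hx.1 hy.1 ha hb hab
  refine ⟨hz, ?_⟩
  rw [hlin _ hz fun i hi => by simp [hsupp x hx i hi, hsupp y hy i hi], map_add, map_smul,
    map_smul, ← hlin x hx.1 (hsupp x hx), ← hlin y hy.1 (hsupp y hy), hx.2, hy.2]

theorem fixedPoints_nonempty (hm : 0 < m) :
    {x ∈ stdSimplex ℝ (Fin m) | QSO p x = x}.Nonempty := by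
  obtain ⟨n, hk⟩ := exists_iterate_mem_periodicPts σ (⟨0, hm⟩ : Fin m)
  set k := σ^[n] ⟨0, hm⟩
  have hL : 0 < minimalPeriod σ k := minimalPeriod_pos_of_mem_periodicPts hk
  set x := ∑ l ∈ range (minimalPeriod σ k), ((minimalPeriod σ k : ℝ)⁻¹ • vertex (σ^[l] k))
  have hx : x ∈ stdSimplex ℝ (Fin m) := (convex_stdSimplex ℝ _).sum_mem
    (fun _ _ => by positivity) (by simp [hL.ne']) fun l _ => vertex_mem_stdSimplex _
  have hxP : ∀ i ∉ periodicPts σ, x i = 0 := by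
    intro i hi
    simp only [x, Finset.sum_apply, Pi.smul_apply, vertex]
    refine Finset.sum_eq_zero fun l _ => ?_
    rw [if_neg, smul_zero]
    rintro rfl
    exact hi ((bijOn_periodicPts σ).mapsTo.iterate l hk)
  refine ⟨x, hx, ?_⟩
  rw [hd.qso_eq_pushforward hp hσ (bijOn_periodicPts σ).injOn hx.2 hxP]
  simp only [x, map_sum, map_smul, pushforward_vertex, ← iterate_succ_apply' σ]
  exact sum_range_minimalPeriod_iterate_succ σ k fun j => (minimalPeriod σ k : ℝ)⁻¹ • vertex j

end IsDissipative

/-- a dissipative q.s.o. has at least one fixed point, and its fixed point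
set is either a singleton or infinite. -/
theorem stmt6 {m : ℕ} (hm : 0 < m) (p : Fin m → Fin m → Fin m → ℝ)
    (hp : IsQSOCoeff p) (hd : IsDissipative p) :
    {x ∈ stdSimplex ℝ (Fin m) | QSO p x = x}.Nonempty ∧
    ((∃ a : Fin m → ℝ, {x ∈ stdSimplex ℝ (Fin m) | QSO p x = x} = {a}) ∨
      {x ∈ stdSimplex ℝ (Fin m) | QSO p x = x}.Infinite) := by
  obtain ⟨σ, hσ⟩ := hd.exists_diag_eq_vertex hp
  have hne := hd.fixedPoints_nonempty hp hσ hm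
  exact ⟨hne, (hd.convex_fixedPoints hp hσ).eq_singleton_or_infinite hne⟩
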